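/- Let γ be a real number and m a positive natural number. Define the differential operator K acting on polynomials p ∈ ℝ[X] by K p = −p'' + (2X³ + γ·√m·X)·p' − (4m·X² − (γ·√m)/2)·p. If p is a polynomial all of whose nonzero coefficients are in even degrees and deg p ≤ 2m, then K p also has nonzero coefficients only in even degrees and deg(K p) ≤ 2m. In other words, K preserves the (m+1)-dimensional linear space of even polynomials of degree ≤ 2m. -/

import Mathlib

/-! Write `K p = -p'' + γ√m (X p' + p / 2) + 2 X² (X p' - 2m p)`. The operators `p ↦ p''` and
`p ↦ X p'` preserve parity and do not raise the degree. The Euler operator `X d/dX` multiplies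
`X^k` by `k`, so `X p' - 2m p` kills the coefficient of `X^(2m)`; being even, it then has degree
at most `2m - 2`, and multiplying it by `X²` lands back in degree `≤ 2m`. -/

open Polynomial

namespace Polynomial

variable {R : Type*}

section Semiring

variable [Semiring R]

variable (R) in
def evenSubmodule : Submodule R R[X] where
  carrier := {p | ∀ k, Odd k → p.coeff k = 0}
  add_mem' hp hq k hk := by rw [coeff_add, hp k hk, hq k hk, add_zero]
  zero_mem' k _ := coeff_zero k
  smul_mem' c p hp k hk := by rw [coeff_smul, hp k hk, smul_zero]

theorem mem_evenSubmodule {p : R[X]} : p ∈ evenSubmodule R ↔ ∀ k, Odd k → p.coeff k = 0 :=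
  Iff.rfl

theorem coeff_X_mul_derivative (p : R[X]) (k : ℕ) :
    (X * derivative p).coeff k = p.coeff k * k := by
  cases k with
  | zero => simp
  | succ k => rw [coeff_X_mul, coeff_derivative, Nat.cast_succ]

theorem X_mul_derivative_mem_evenSubmodule {p : R[X]} (hp : p ∈ evenSubmodule R) :
    X * derivative p ∈ evenSubmodule R := fun k hk => by
  rw [coeff_X_mul_derivative, hp k hk, zero_mul]

theorem derivative_derivative_mem_evenSubmodule {p : R[X]} (hp : p ∈ evenSubmodule R) :
    derivative (derivative p) ∈ evenSubmodule R := fun k hk => by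
  rw [coeff_derivative, coeff_derivative, hp (k + 1 + 1) (by simpa [parity_simps] using hk),
    zero_mul, zero_mul]

theorem X_sq_mul_mem_evenSubmodule {p : R[X]} (hp : p ∈ evenSubmodule R) :
    X ^ 2 * p ∈ evenSubmodule R := fun k hk => by
  rw [coeff_X_pow_mul']
  split_ifs with h2
  · exact hp (k - 2) (by obtain ⟨j, rfl⟩ := hk; exact ⟨j - 1, by omega⟩)
  · rfl

theorem degree_X_mul_derivative_le (p : R[X]) : (X * derivative p).degree ≤ p.degree :=
  (degree_le_iff_coeff_zero _ _).2 fun k hk => by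
    rw [coeff_X_mul_derivative, coeff_eq_zero_of_degree_lt hk, zero_mul]

end Semiring

section Ring

variable [Ring R]

theorem coeff_X_mul_derivative_sub_C_mul (p : R[X]) (n k : ℕ) :
    (X * derivative p - C (n : R) * p).coeff k = p.coeff k * (k - n) := by
  rw [coeff_sub, coeff_X_mul_derivative, coeff_C_mul, (Nat.cast_commute n _).eq, mul_sub]

theorem degree_X_sq_mul_X_mul_derivative_sub_le {p : R[X]} {m : ℕ}
    (heven : p ∈ evenSubmodule R) (hdeg : p.degree ≤ (2 * m : ℕ)) :
    (X ^ 2 * (X * derivative p - C ((2 * m : ℕ) : R) * p)).degree ≤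
      ((2 * m : ℕ) : WithBot ℕ) := by
  refine (degree_le_iff_coeff_zero _ _).2 fun k hk => ?_
  have hlt : 2 * m < k := by exact_mod_cast hk
  rw [coeff_X_pow_mul']
  split_ifs with h2
  · rw [coeff_X_mul_derivative_sub_C_mul]
    rcases Nat.even_or_odd k with ⟨j, rfl⟩ | hodd
    · obtain hj | hj := eq_or_lt_of_le (show 2 * m ≤ j + j - 2 by omega)
      · rw [← hj, sub_self, mul_zero]
      · rw [coeff_eq_zero_of_degree_lt (hdeg.trans_lt (by exact_mod_cast hj)), zero_mul]
    · rw [heven (k - 2) (by obtain ⟨j, rfl⟩ := hodd; exact ⟨j - 1, by omega⟩), zero_mul]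
  · rfl

end Ring

end Polynomial

theorem stmt_0 (γ : ℝ) (m : ℕ) (p : ℝ[X])
    (heven : ∀ k : ℕ, Odd k → p.coeff k = 0) (hdeg : p.degree ≤ (2 * m : ℕ)) :
    let K : ℝ[X] → ℝ[X] := fun q =>
      -(derivative (derivative q))
        + (2 * X ^ 3 + C (γ * Real.sqrt m) * X) * derivative q
        - (C (4 * (m : ℝ)) * X ^ 2 - C (γ * Real.sqrt m / 2)) * q
    (∀ k : ℕ, Odd k → (K p).coeff k = 0) ∧ (K p).degree ≤ (2 * m : ℕ) := by
  intro K
  set V := evenSubmodule ℝ ⊓ degreeLE ℝ (2 * m : ℕ)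
  have hp : p ∈ V := ⟨heven, mem_degreeLE.2 hdeg⟩
  have hp'' : derivative (derivative p) ∈ V :=
    ⟨derivative_derivative_mem_evenSubmodule heven,
      mem_degreeLE.2 (degree_derivative_le.trans (degree_derivative_le.trans hdeg))⟩
  have hXp' : X * derivative p ∈ V :=
    ⟨X_mul_derivative_mem_evenSubmodule heven,
      mem_degreeLE.2 ((degree_X_mul_derivative_le p).trans hdeg)⟩
  have hEuler : X ^ 2 * (X * derivative p - C ((2 * m : ℕ) : ℝ) * p) ∈ V :=
    ⟨X_sq_mul_mem_evenSubmodule (sub_mem (X_mul_derivative_mem_evenSubmodule heven)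
        (by rw [← smul_eq_C_mul]; exact Submodule.smul_mem _ _ heven)),
      mem_degreeLE.2 (degree_X_sq_mul_X_mul_derivative_sub_le heven hdeg)⟩
  have hK : K p = -derivative (derivative p) + (γ * √m) • (X * derivative p)
      + (γ * √m / 2) • p
      + (2 : ℝ) • (X ^ 2 * (X * derivative p - C ((2 * m : ℕ) : ℝ) * p)) := by
    simp only [K, smul_eq_C_mul, Nat.cast_mul, Nat.cast_ofNat, C_mul, map_ofNat, C_eq_natCast]
    ring
  have hKp : K p ∈ V := by
    rw [hK]
    exact V.add_mem (V.add_mem (V.add_mem (V.neg_mem hp'') (V.smul_mem _ hXp')) (V.smul_mem _ hp))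
      (V.smul_mem _ hEuler)
  exact ⟨hKp.1, mem_degreeLE.1 hKp.2⟩
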